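/- The ℂ-vector space of functions f : 𝕄 → ℂ such that (i) f(gM) = f(M) for all g ∈ GL₂(R) and M ∈ 𝕄, and (ii) f(M·diag(a,d)) = χ(ā)·χ(d̄)·f(M) for all a, d ∈ Rˣ and M ∈ 𝕄, is one-dimensional, and the function f̃ is a basis of this space. -/

import Mathlib

open IsLocalRing

noncomputable section

variable (R : Type*) [CommRing R] [IsDomain R] [IsDiscreteValuationRing R]

/-- The condition defining the set `𝕄` of `2×2` matrices over `R` whose determinant has
valuation exactly `1`. -/
def inMM (M : Matrix (Fin 2) (Fin 2) R) : Prop :=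
  M.det ∈ maximalIdeal R ∧ M.det ∉ (maximalIdeal R) ^ 2

/-- The set `𝕄`, as a type. -/
abbrev MM := {M : Matrix (Fin 2) (Fin 2) R // inMM R M}

variable [Fintype (ResidueField R)] [DecidableEq (ResidueField R)]

/-- The function `f̃ : 𝕄 → ℂ`: `f̃(M) = χ(M̄₁₁·M̄₁₂)` if `M₁₁, M₁₂` are units,
`f̃(M) = χ(M̄₂₁·M̄₂₂)` if `M₂₁, M₂₂` are units, and `f̃(M) = 0` otherwise. -/
def ftilde (M : MM R) : ℂ := by
  classical
  exact
    if IsUnit (M.1 0 0) ∧ IsUnit (M.1 0 1) then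
      ((quadraticChar (ResidueField R) (residue R (M.1 0 0) * residue R (M.1 0 1)) : ℤ) : ℂ)
    else if IsUnit (M.1 1 0) ∧ IsUnit (M.1 1 1) then
      ((quadraticChar (ResidueField R) (residue R (M.1 1 0) * residue R (M.1 1 1)) : ℤ) : ℂ)
    else 0

/-- The two conditions on a function `f : 𝕄 → ℂ`:
(i) `f(gM) = f(M)` for all `g ∈ GL₂(R)` and `M ∈ 𝕄`;
(ii) `f(M·diag(a,d)) = χ(ā)·χ(d̄)·f(M)` for all units `a, d` of `R` and `M ∈ 𝕄`. -/
def GoodFun (f : MM R → ℂ) : Prop :=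
  (∀ (g : (Matrix (Fin 2) (Fin 2) R)ˣ) (M : MM R)
      (h : inMM R ((g : Matrix (Fin 2) (Fin 2) R) * M.1)),
      f ⟨(g : Matrix (Fin 2) (Fin 2) R) * M.1, h⟩ = f M) ∧
  (∀ (a d : Rˣ) (M : MM R)
      (h : inMM R (M.1 * Matrix.diagonal ![(a : R), (d : R)])),
      f ⟨M.1 * Matrix.diagonal ![(a : R), (d : R)], h⟩ =
        ((quadraticChar (ResidueField R) (residue R (a : R)) : ℤ) : ℂ) *
          ((quadraticChar (ResidueField R) (residue R (d : R)) : ℤ) : ℂ) * f M)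

end

/-!
For `M ∈ 𝕄` the reduction `M̄` has rank one, so its kernel is a line `⟨v⟩`, and `f̃ M = χ(-v₀v₁)`.
Two elements of `𝕄` whose reductions have the same kernel differ by a left factor in `GL₂(R)`:
`det M` is a uniformizer and `M' * adjugate M` vanishes modulo it. Hence a function satisfying (i)
depends only on the kernel line. Condition (ii) then forces it to vanish on the lines `⟨e₁⟩` and
`⟨e₂⟩`, which are fixed by a diagonal matrix with a nonsquare entry, and relates its value on any
other line `⟨(v₀, v₁)⟩` to its value at `!![1, 1; 0, ϖ]` by the factor `χ(-v₀v₁)`.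
-/

open IsLocalRing Matrix

section TwoByTwo

variable {K : Type*} [CommRing K]

lemma mulVec_eq_zero_iff_fin_two {N : Matrix (Fin 2) (Fin 2) K} {v : Fin 2 → K} :
    N *ᵥ v = 0 ↔ ∀ i, N i 0 * v 0 + N i 1 * v 1 = 0 := by
  simp [funext_iff]

variable [NoZeroDivisors K]

lemma eq_zero_of_mul_eq_zero_fin_two {x : K} {v : Fin 2 → K} (hv : v ≠ 0)
    (h0 : x * v 0 = 0) (h1 : x * v 1 = 0) : x = 0 := by
  by_contra hx
  exact hv (funext fun i => by fin_cases i <;> simp_all)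

/-- Each column of `adjugate N` is proportional to `v`: its cross product with `v` is an entry
of `N *ᵥ v`. -/
lemma mul_adjugate_eq_zero_of_mulVec_eq_zero {N N' : Matrix (Fin 2) (Fin 2) K} {v : Fin 2 → K}
    (hv : v ≠ 0) (h : N *ᵥ v = 0) (h' : N' *ᵥ v = 0) : N' * N.adjugate = 0 := by
  rw [mulVec_eq_zero_iff_fin_two] at h h'
  ext i j
  apply eq_zero_of_mul_eq_zero_fin_two hv <;> fin_cases j <;>
    simp only [adjugate_fin_two, mul_apply, Fin.sum_univ_two, of_apply, cons_val', cons_val_zero,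
      cons_val_one, empty_val', cons_val_fin_one, Fin.zero_eta, Fin.mk_one]
  · linear_combination N 1 1 * h' i - N' i 1 * h 1
  · linear_combination N' i 1 * h 0 - N 0 1 * h' i
  · linear_combination N' i 0 * h 1 - N 1 0 * h' i
  · linear_combination N 0 0 * h' i - N' i 0 * h 0

lemma mul_eq_zero_of_mulVec_eq_zero {N : Matrix (Fin 2) (Fin 2) K} {v : Fin 2 → K} (hN : N ≠ 0)
    (hNv : N *ᵥ v = 0) (h0 : N 0 0 = 0 ∨ N 0 1 = 0) (h1 : N 1 0 = 0 ∨ N 1 1 = 0) :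
    v 0 * v 1 = 0 := by
  rw [mulVec_eq_zero_iff_fin_two] at hNv
  by_contra hv
  obtain ⟨hv0, hv1⟩ := mul_ne_zero_iff.mp hv
  have row : ∀ i, N i 0 = 0 ∨ N i 1 = 0 → N i 0 = 0 ∧ N i 1 = 0 := by
    rintro i (hi | hi) <;> have := hNv i <;> simp_all
  apply hN
  ext i j
  fin_cases i <;> fin_cases j
  exacts [(row 0 h0).1, (row 0 h0).2, (row 1 h1).1, (row 1 h1).2]

end TwoByTwo

section QuadraticChar

variable {F : Type*} [Field F] [Fintype F] [DecidableEq F]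

lemma quadraticChar_mul_eq_of_add_eq_zero {x y a b : F} (h : x * a + y * b = 0) (hx : x ≠ 0)
    (hb : b ≠ 0) : quadraticChar F (x * y) = quadraticChar F (-(a * b)) := by
  have hxy : x * y = -(a * b) * (x / b) ^ 2 := by
    rw [div_pow, ← mul_div_assoc, eq_div_iff (pow_ne_zero 2 hb)]
    linear_combination x * b * h
  rw [hxy, map_mul, quadraticChar_sq_one' (div_ne_zero hx hb), mul_one]

lemma quadraticChar_row_mul_eq {N : Matrix (Fin 2) (Fin 2) F} {v : Fin 2 → F} (hv : v ≠ 0)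
    (hNv : N *ᵥ v = 0) {i : Fin 2} (h0 : N i 0 ≠ 0) :
    quadraticChar F (N i 0 * N i 1) = quadraticChar F (-(v 0 * v 1)) := by
  have hrow := mulVec_eq_zero_iff_fin_two.mp hNv i
  refine quadraticChar_mul_eq_of_add_eq_zero hrow h0 fun hv1 => hv ?_
  have hv0 : v 0 = 0 := by simpa [hv1, h0] using hrow
  exact funext fun j => by fin_cases j <;> simp [hv0, hv1]

end QuadraticChar

section DVR

variable {R : Type*} [CommRing R] [IsDomain R] [IsDiscreteValuationRing R]

lemma mem_maximalIdeal_and_notMem_sq_iff_irreducible {x : R} :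
    x ∈ maximalIdeal R ∧ x ∉ maximalIdeal R ^ 2 ↔ Irreducible x := by
  constructor
  · rintro ⟨hx, hx2⟩
    obtain ⟨ϖ, hϖ⟩ := IsDiscreteValuationRing.exists_irreducible R
    rw [hϖ.maximalIdeal_eq, Ideal.mem_span_singleton'] at hx
    obtain ⟨y, rfl⟩ := hx
    have hy : IsUnit y := by
      by_contra hy
      rw [← mem_nonunits_iff, ← mem_maximalIdeal, hϖ.maximalIdeal_eq,
        Ideal.mem_span_singleton'] at hy
      obtain ⟨z, rfl⟩ := hy
      rw [hϖ.maximalIdeal_eq, Ideal.span_singleton_pow, Ideal.mem_span_singleton'] at hx2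
      exact hx2 ⟨z, by ring⟩
    rwa [mul_comm, irreducible_mul_isUnit hy]
  · intro hx
    rw [hx.maximalIdeal_eq, Ideal.span_singleton_pow, Ideal.mem_span_singleton',
      Ideal.mem_span_singleton']
    refine ⟨⟨1, one_mul x⟩, ?_⟩
    rintro ⟨z, hz⟩
    exact hx.not_isUnit <| IsUnit.of_mul_eq_one z <|
      mul_left_cancel₀ hx.ne_zero (by linear_combination hz)

lemma inMM_iff_irreducible {M : Matrix (Fin 2) (Fin 2) R} : inMM R M ↔ Irreducible M.det :=
  mem_maximalIdeal_and_notMem_sq_iff_irreducible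

lemma inMM.mul_of_isUnit_det {M N : Matrix (Fin 2) (Fin 2) R} (hM : inMM R M)
    (hN : IsUnit N.det) : inMM R (M * N) := by
  rw [inMM_iff_irreducible, det_mul, irreducible_mul_isUnit hN]
  exact inMM_iff_irreducible.mp hM

lemma inMM.det_map_residue {M : Matrix (Fin 2) (Fin 2) R} (hM : inMM R M) :
    (M.map (residue R)).det = 0 := by
  rw [← RingHom.mapMatrix_apply, ← RingHom.map_det, residue_eq_zero_iff]
  exact hM.1

lemma inMM.map_residue_ne_zero {M : Matrix (Fin 2) (Fin 2) R} (hM : inMM R M) :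
    M.map (residue R) ≠ 0 := by
  intro h0
  have hm : ∀ i j, M i j ∈ maximalIdeal R := fun i j =>
    (residue_eq_zero_iff _).mp (congrFun₂ h0 i j)
  apply hM.2
  rw [det_fin_two, sq]
  exact Ideal.sub_mem _ (Ideal.mul_mem_mul (hm 0 0) (hm 1 1)) (Ideal.mul_mem_mul (hm 0 1) (hm 1 0))

lemma inMM.exists_mulVec_eq_zero {M : Matrix (Fin 2) (Fin 2) R} (hM : inMM R M) :
    ∃ v ≠ 0, M.map (residue R) *ᵥ v = 0 :=
  exists_mulVec_eq_zero_iff.mpr hM.det_map_residue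

/-- Since `det M` is a uniformizer, `M' * adjugate M = det M • B` with `B * M = M'`, and
`det B` is a unit because `det M' = det B * det M` is irreducible. -/
lemma inMM.exists_eq_units_mul {M M' : Matrix (Fin 2) (Fin 2) R} (hM : inMM R M)
    (hM' : inMM R M') {v : Fin 2 → ResidueField R} (hv : v ≠ 0)
    (h : M.map (residue R) *ᵥ v = 0) (h' : M'.map (residue R) *ᵥ v = 0) :
    ∃ g : (Matrix (Fin 2) (Fin 2) R)ˣ, M' = g * M := by
  have hirr := inMM_iff_irreducible.mp hM
  have hred : (M' * M.adjugate).map (residue R) = 0 := by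
    rw [Matrix.map_mul, ← RingHom.mapMatrix_apply (residue R) M.adjugate, RingHom.map_adjugate]
    exact mul_adjugate_eq_zero_of_mulVec_eq_zero hv h h'
  have hdvd : ∀ i j, M.det ∣ (M' * M.adjugate) i j := fun i j => by
    rw [← Ideal.mem_span_singleton, ← hirr.maximalIdeal_eq, ← residue_eq_zero_iff]
    exact congrFun₂ hred i j
  choose B hB using hdvd
  have hBM : of B * M = M' := by
    apply smul_right_injective _ hirr.ne_zero
    calc M.det • (of B * M) = M' * M.adjugate * M := by
          rw [← smul_mul]; congr 1; ext i j; exact (hB i j).symm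
      _ = M.det • M' := by rw [Matrix.mul_assoc, adjugate_mul, Matrix.mul_smul, mul_one]
  have hBunit : IsUnit (of B).det := by
    have hdet := inMM_iff_irreducible.mp hM'
    rw [← hBM, det_mul] at hdet
    exact (hdet.isUnit_or_isUnit rfl).resolve_right hirr.not_isUnit
  exact ⟨((isUnit_iff_isUnit_det _).mpr hBunit).unit, hBM.symm⟩

def baseMatrix (ϖ : R) : Matrix (Fin 2) (Fin 2) R := !![1, 1; 0, ϖ]

lemma inMM_baseMatrix {ϖ : R} (hϖ : Irreducible ϖ) : inMM R (baseMatrix ϖ) := by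
  simpa [inMM_iff_irreducible, baseMatrix] using hϖ

end DVR

lemma isUnit_det_diagonal_units {R : Type*} [CommRing R] (a d : Rˣ) :
    IsUnit (diagonal ![(a : R), (d : R)]).det := by
  simp [det_diagonal, Fin.prod_univ_two]

lemma exists_units_residue_eq {R : Type*} [CommRing R] [IsLocalRing R] {x : ResidueField R}
    (hx : x ≠ 0) : ∃ u : Rˣ, residue R u = x := by
  obtain ⟨y, rfl⟩ := residue_surjective x
  exact ⟨((residue_ne_zero_iff_isUnit y).mp hx).unit, rfl⟩

lemma map_residue_mul_diagonal_mulVec {R : Type*} [CommRing R] [IsLocalRing R]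
    (M : Matrix (Fin 2) (Fin 2) R) (a d : R) (v : Fin 2 → ResidueField R) :
    (M * diagonal ![a, d]).map (residue R) *ᵥ v =
      M.map (residue R) *ᵥ ![residue R a * v 0, residue R d * v 1] := by
  rw [Matrix.map_mul, ← mulVec_mulVec, diagonal_map (map_zero _)]
  congr 1
  ext i
  fin_cases i <;> simp [mulVec_diagonal]

section Ftilde

variable {R : Type*} [CommRing R] [IsDomain R] [IsDiscreteValuationRing R]
  [Fintype (ResidueField R)] [DecidableEq (ResidueField R)]

lemma ftilde_eq_quadraticChar (M : MM R) {v : Fin 2 → ResidueField R} (hv : v ≠ 0)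
    (hMv : M.1.map (residue R) *ᵥ v = 0) :
    ftilde R M = quadraticChar (ResidueField R) (-(v 0 * v 1)) := by
  have hrow : ∀ i, residue R (M.1 i 0) ≠ 0 →
      quadraticChar _ (residue R (M.1 i 0) * residue R (M.1 i 1)) =
        quadraticChar _ (-(v 0 * v 1)) := fun i hi => quadraticChar_row_mul_eq hv hMv hi
  simp only [ftilde, ← residue_ne_zero_iff_isUnit]
  split_ifs with h0 h1
  · rw [hrow 0 h0.1]
  · rw [hrow 1 h1.1]
  · rw [mul_eq_zero_of_mulVec_eq_zero M.2.map_residue_ne_zero hMv (by tauto) (by tauto)]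
    simp

lemma goodFun_ftilde : GoodFun R (ftilde R) := by
  constructor
  · intro g M h
    obtain ⟨v, hv, hMv⟩ := M.2.exists_mulVec_eq_zero
    rw [ftilde_eq_quadraticChar M hv hMv, ftilde_eq_quadraticChar ⟨_, h⟩ hv
      (by rw [Matrix.map_mul, ← mulVec_mulVec, hMv, mulVec_zero])]
  · intro a d M h
    obtain ⟨w, hw, hMw⟩ := h.exists_mulVec_eq_zero
    have ha : residue R a ≠ 0 := (residue_ne_zero_iff_isUnit _).mpr a.isUnit
    have hd : residue R d ≠ 0 := (residue_ne_zero_iff_isUnit _).mpr d.isUnit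
    set v : Fin 2 → ResidueField R := ![residue R a * w 0, residue R d * w 1]
    have hv : v ≠ 0 := fun h0 => hw <| funext fun i => by
      fin_cases i
      · simpa [v, ha] using congrFun h0 0
      · simpa [v, hd] using congrFun h0 1
    rw [map_residue_mul_diagonal_mulVec] at hMw
    rw [ftilde_eq_quadraticChar ⟨_, h⟩ hw (by rwa [map_residue_mul_diagonal_mulVec]),
      ftilde_eq_quadraticChar M hv hMw]
    have hsq_a := quadraticChar_sq_one ha
    have hsq_d := quadraticChar_sq_one hd
    have key : quadraticChar _ (-(w 0 * w 1)) = quadraticChar _ (residue R a) *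
        quadraticChar _ (residue R d) * quadraticChar _ (-(v 0 * v 1)) := by
      have hv01 : -(v 0 * v 1) = residue R a * residue R d * -(w 0 * w 1) := by
        simp only [v, cons_val_zero, cons_val_one]
        ring
      rw [hv01, map_mul, map_mul]
      set x := quadraticChar _ (-(w 0 * w 1))
      linear_combination (-(x * quadraticChar _ (residue R d) ^ 2)) * hsq_a - x * hsq_d
    exact_mod_cast key

lemma ftilde_baseMatrix {ϖ : R} (hϖ : Irreducible ϖ) :
    ftilde R ⟨baseMatrix ϖ, inMM_baseMatrix hϖ⟩ = 1 := by
  simp [ftilde, baseMatrix]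

end Ftilde

namespace GoodFun

variable {R : Type*} [CommRing R] [IsDomain R] [IsDiscreteValuationRing R]
  [Fintype (ResidueField R)] [DecidableEq (ResidueField R)] {f : MM R → ℂ}

lemma apply_eq_of_mulVec_eq_zero (hf : GoodFun R f) {M M' : MM R}
    {v : Fin 2 → ResidueField R} (hv : v ≠ 0) (h : M.1.map (residue R) *ᵥ v = 0)
    (h' : M'.1.map (residue R) *ᵥ v = 0) : f M' = f M := by
  obtain ⟨g, hg⟩ := M.2.exists_eq_units_mul M'.2 hv h h'
  calc f M' = f ⟨g * M.1, hg ▸ M'.2⟩ := congrArg f (Subtype.ext hg)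
    _ = f M := hf.1 g M _

lemma apply_eq_mul_self (hf : GoodFun R f) {M : MM R} {v : Fin 2 → ResidueField R}
    (hv : v ≠ 0) (hMv : M.1.map (residue R) *ᵥ v = 0) (a d : Rˣ) {c : ResidueField R}
    (hc : ![residue R a * v 0, residue R d * v 1] = c • v) :
    f M = quadraticChar (ResidueField R) (residue R a) *
      quadraticChar (ResidueField R) (residue R d) * f M := by
  have hMD := M.2.mul_of_isUnit_det (isUnit_det_diagonal_units a d)
  rw [← hf.2 a d M hMD]
  refine hf.apply_eq_of_mulVec_eq_zero hv ?_ hMv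
  rw [map_residue_mul_diagonal_mulVec, hc, mulVec_smul, hMv, smul_zero]

/-- Multiplying by `diag(1, u)` or `diag(u, 1)` with `ū` a nonsquare fixes the kernel line of
`M̄` but changes the sign of `f M`. -/
lemma apply_eq_zero (hF : ringChar (ResidueField R) ≠ 2) (hf : GoodFun R f) {M : MM R}
    {v : Fin 2 → ResidueField R} (hv : v ≠ 0) (hMv : M.1.map (residue R) *ᵥ v = 0)
    (h : v 0 * v 1 = 0) : f M = 0 := by
  obtain ⟨s, hs⟩ := FiniteField.exists_nonsquare hF
  obtain ⟨u, hu⟩ := exists_units_residue_eq (R := R) (x := s) <| by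
    rintro rfl
    exact hs IsSquare.zero
  have hχ : quadraticChar (ResidueField R) (residue R u) = -1 := by
    rw [hu]
    exact quadraticChar_neg_one_iff_not_isSquare.mpr hs
  have key : f M = -f M := by
    rcases mul_eq_zero.mp h with h0 | h1
    · simpa [hχ] using hf.apply_eq_mul_self hv hMv 1 u (c := s)
        (by ext i; fin_cases i <;> simp [h0, hu])
    · simpa [hχ] using hf.apply_eq_mul_self hv hMv u 1 (c := s)
        (by ext i; fin_cases i <;> simp [h1, hu])
  linear_combination key / 2

/-- `M` shares the kernel vector `v` with `baseMatrix ϖ * diag(q, -p)`, where `p̄ = v 0`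
and `q̄ = v 1`. -/
lemma apply_eq_quadraticChar_mul (hf : GoodFun R f) {ϖ : R} (hϖ : Irreducible ϖ) {M : MM R}
    {v : Fin 2 → ResidueField R} (hMv : M.1.map (residue R) *ᵥ v = 0) (h : v 0 * v 1 ≠ 0) :
    f M = quadraticChar (ResidueField R) (-(v 0 * v 1)) *
      f ⟨baseMatrix ϖ, inMM_baseMatrix hϖ⟩ := by
  obtain ⟨hv0, hv1⟩ := mul_ne_zero_iff.mp h
  have hv : v ≠ 0 := fun h0 => hv0 (by simp [h0])
  obtain ⟨p, hp⟩ := exists_units_residue_eq hv0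
  obtain ⟨q, hq⟩ := exists_units_residue_eq hv1
  have hB := (inMM_baseMatrix hϖ).mul_of_isUnit_det (isUnit_det_diagonal_units q (-p))
  have hϖ0 : residue R ϖ = 0 := (residue_eq_zero_iff ϖ).mpr hϖ.not_isUnit
  have hker :
      (baseMatrix ϖ * diagonal ![(q : R), ((-p : Rˣ) : R)]).map (residue R) *ᵥ v = 0 := by
    rw [map_residue_mul_diagonal_mulVec, hq, Units.val_neg, map_neg, hp]
    ext i
    fin_cases i <;> simp [baseMatrix, mulVec, dotProduct, Fin.sum_univ_two, hϖ0, mul_comm]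
  rw [hf.apply_eq_of_mulVec_eq_zero (M := ⟨_, hB⟩) hv hker hMv,
    hf.2 q (-p) ⟨baseMatrix ϖ, inMM_baseMatrix hϖ⟩ hB, hq, Units.val_neg, map_neg, hp,
    show -(v 0 * v 1) = v 1 * -v 0 by ring, map_mul]
  push_cast
  ring

end GoodFun

theorem stmt_3 (R : Type*) [CommRing R] [IsDomain R] [IsDiscreteValuationRing R]
    [Fintype (ResidueField R)] [DecidableEq (ResidueField R)]
    (hodd : Odd (Fintype.card (ResidueField R))) :
    GoodFun R (ftilde R) ∧ ftilde R ≠ 0 ∧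
      ∀ f : MM R → ℂ, GoodFun R f → ∃ c : ℂ, f = c • ftilde R := by
  obtain ⟨ϖ, hϖ⟩ := IsDiscreteValuationRing.exists_irreducible R
  have hF : ringChar (ResidueField R) ≠ 2 := fun h2 => by
    simp [Nat.odd_iff, FiniteField.even_card_of_char_two h2] at hodd
  set A : MM R := ⟨baseMatrix ϖ, inMM_baseMatrix hϖ⟩
  refine ⟨goodFun_ftilde, fun h0 => by simpa [A, ftilde_baseMatrix hϖ] using congrFun h0 A,
    fun f hf => ⟨f A, funext fun M => ?_⟩⟩
  obtain ⟨v, hv, hMv⟩ := M.2.exists_mulVec_eq_zero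
  rw [Pi.smul_apply, smul_eq_mul, ftilde_eq_quadraticChar M hv hMv]
  by_cases h : v 0 * v 1 = 0
  · rw [hf.apply_eq_zero hF hv hMv h, h, neg_zero, quadraticChar_zero, Int.cast_zero, mul_zero]
  · rw [hf.apply_eq_quadraticChar_mul hϖ hMv h, mul_comm]
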